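/- arXiv:1011.0098 — 2 statements merged into one kernel-verified Lean document; each statement's English description precedes it below -/
import Mathlib

section
/- For three o-points A, B, C with coincident positions p_A = p_B = p_C, the configuration A ∠i B, B ∠k C, A ∠s C is realizable if and only if turn_m(i, k, -s) holds. -/
open Real Complex

/-- The OPRA_m sector `[i]_m` as a subset of the circle `ℝ/2πℤ` (`Real.Angle`):
an open arc if `i` is odd, a single point if `i` is even. -/
noncomputable def sector (m : ℕ) (i : ZMod (4*m)) : Set Real.Angle :=
  if Odd i.val then
    (fun r : ℝ => (r : Real.Angle)) ''
      Set.Ioo (2*π*((i.val : ℝ)-1)/(4*m)) (2*π*((i.val : ℝ)+1)/(4*m))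
  else {((2*π*(i.val : ℝ)/(4*m) : ℝ) : Real.Angle)}

/-- The direction angle `φ_XY` of the vector `Y - X`, as an element of the circle. -/
noncomputable def phiAngle (X Y : ℂ) : Real.Angle := (Complex.arg (Y - X) : Real.Angle)

/-- An o-point: a point of the plane (modeled as `ℂ`) with an orientation. -/
abbrev OPoint := ℂ × Real.Angle

/-- The distinct-position OPRA_m base relation `A ∠_i^j B`. -/
noncomputable def oprarel (m : ℕ) (i j : ZMod (4*m)) (A B : OPoint) : Prop :=
  A.1 ≠ B.1 ∧ phiAngle A.1 B.1 - A.2 ∈ sector m i ∧ phiAngle B.1 A.1 - B.2 ∈ sector m j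

/-- The same-position OPRA_m base relation `A ∠i B`. -/
noncomputable def oprasame (m : ℕ) (i : ZMod (4*m)) (A B : OPoint) : Prop :=
  A.1 = B.1 ∧ B.2 - A.2 ∈ sector m i

/-- `turn_m(i,j,k)`. -/
def turnRel (m : ℕ) (i j k : ZMod (4*m)) : Prop :=
  if Odd i.val ∧ Odd j.val then i + j + k = 0 ∨ i + j + k = 1 ∨ i + j + k = -1
  else i + j + k = 0

/-- `sign_m(i)`. -/
def signm (m : ℕ) (i : ZMod (4*m)) : ℤ :=
  if i.val = 0 ∨ i.val = 2*m then 0 else if i.val < 2*m then 1 else -1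

/-- `triangle_m(i,j,k)`. -/
def triRel (m : ℕ) (i j k : ZMod (4*m)) : Prop :=
  turnRel m i j (k - ((2*m : ℕ) : ZMod (4*m))) ∧
  ¬(i = ((2*m : ℕ) : ZMod (4*m)) ∧ j = ((2*m : ℕ) : ZMod (4*m)) ∧ k = ((2*m : ℕ) : ZMod (4*m))) ∧
  signm m i = signm m j ∧ signm m j = signm m k

/-- The sign of an angle, where both `0` and `π` get sign `0`. -/
noncomputable def angsign (θ : Real.Angle) : ℤ := by
  classical exact if θ.toReal = 0 ∨ θ.toReal = π then 0 else if 0 < θ.toReal then 1 else -1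

/-!
Measure angles in units of `2π/(4m)`. Then the sector `[j]_m` consists of the angles `j + x` with
offset `x ∈ (-1, 1)` if `j` is odd and `x = 0` if `j` is even. Since
`φ_C - φ_A = (φ_B - φ_A) + (φ_C - φ_B)`, the configuration is realizable iff
`(i + x) + (k + y) ≡ s + z (mod 4m)` for admissible offsets, i.e. iff `i + k - s ≡ D` for the
integer `D = z - x - y`. Now `|D|` is less than the number of odd indices among `i, k, s` (or
`D = 0` when there are none) and `D ≡ i + k - s (mod 2)`; this leaves `D ∈ {-1, 0, 1}` when `i`
and `k` are both odd and `D = 0` otherwise. Conversely such a `D` is realized by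
`x = y = -D/4`, `z = D/2`.
-/

lemma abs_sub_lt_add_or_sub_eq_zero {α : Type*} [AddCommGroup α] [LinearOrder α]
    [IsOrderedAddMonoid α] {x y w v : α} (hw : 0 ≤ w) (hv : 0 ≤ v)
    (hx : |x| < w ∨ x = 0) (hy : |y| < v ∨ y = 0) : |x - y| < w + v ∨ x - y = 0 := by
  rcases hx with hx | rfl <;> rcases hy with hy | rfl
  · exact .inl ((abs_sub x y).trans_lt (add_lt_add hx hy))
  · exact .inl (by simpa using hx.trans_le (le_add_of_nonneg_right hv))
  · exact .inl (by simpa using hy.trans_le (le_add_of_nonneg_left hw))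
  · exact .inr (sub_zero 0)

-- For odd `n` this says `|x| < 1`, for even `n` it says `x = 0`.
def SectorOffset (n : ℕ) (x : ℝ) : Prop := |x| < ((n % 2 : ℕ) : ℝ) ∨ x = 0

lemma SectorOffset.neg {n : ℕ} {x : ℝ} (h : SectorOffset n x) : SectorOffset n (-x) := by
  simpa [SectorOffset, abs_neg] using h

lemma exists_sectorOffset_sub_sub_eq_iff {a b c : ℕ} {D : ℤ}
    (hD : (2 : ℤ) ∣ a + b - c - D) :
    (∃ x y z, SectorOffset a x ∧ SectorOffset b y ∧ SectorOffset c z ∧ z - x - y = D) ↔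
      if Odd a ∧ Odd b then D = 0 ∨ D = 1 ∨ D = -1 else D = 0 := by
  simp only [Nat.odd_iff]
  constructor
  · rintro ⟨x, y, z, hx, hy, hz, hxyz⟩
    have hbound := abs_sub_lt_add_or_sub_eq_zero (by positivity) (by positivity)
      (abs_sub_lt_add_or_sub_eq_zero (by positivity) (by positivity) hz hx) hy
    rw [hxyz, ← Int.cast_abs, ← Nat.cast_add, ← Nat.cast_add] at hbound
    generalize hw : c % 2 + a % 2 + b % 2 = w at hbound
    have hD' : |D| < w ∨ D = 0 := by exact_mod_cast hbound
    rw [abs_lt] at hD'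
    split_ifs <;> omega
  · intro hturn
    have hoffset (n : ℕ) (hn : D ≠ 0 → n % 2 = 1) (r : ℝ) (hr : 1 < r) :
        SectorOffset n (D / r) := by
      by_cases hD0 : D = 0
      · simp [SectorOffset, hD0]
      · have hD1 : |(D : ℝ)| ≤ 1 := by
          rw [abs_le]; constructor <;> norm_cast <;> split_ifs at hturn <;> omega
        left
        rw [hn hD0, abs_div, abs_of_pos (show 0 < r by linarith), div_lt_iff₀ (by linarith)]
        push_cast
        linarith
    refine ⟨-(D / 4), -(D / 4), D / 2, (hoffset a ?_ 4 ?_).neg, (hoffset b ?_ 4 ?_).neg,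
      hoffset c ?_ 2 ?_, by ring⟩ <;> first | (intro; split_ifs at hturn <;> omega) | norm_num

lemma mem_sector_iff {m : ℕ} (hm : m ≠ 0) (j : ZMod (4 * m)) (θ : Real.Angle) :
    θ ∈ sector m j ↔
      ∃ x, SectorOffset j.val x ∧
        θ = (((j.val + x) * (2 * π / (4 * m)) : ℝ) : Real.Angle) := by
  have hδ : 0 < 2 * π / (4 * m) := by positivity
  have hscale (t : ℝ) : 2 * π * t / (4 * m) = t * (2 * π / (4 * m)) := by ring
  unfold sector SectorOffset
  rw [hscale, hscale, hscale]
  generalize 2 * π / (4 * m) = δ at hδ ⊢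
  split_ifs with hj
  · simp only [Nat.odd_iff.mp hj, Nat.cast_one, Set.mem_image, Set.mem_Ioo]
    constructor
    · rintro ⟨r, ⟨hlo, hhi⟩, rfl⟩
      refine ⟨r / δ - j.val, .inl (abs_sub_lt_iff.mpr ⟨?_, ?_⟩), by field_simp; ring_nf⟩
      · rw [sub_lt_iff_lt_add', div_lt_iff₀ hδ]; linarith
      · rw [sub_lt_comm, lt_div_iff₀ hδ]; linarith
    · rintro ⟨x, hx, rfl⟩
      have hx1 : |x| < 1 := by rcases hx with hx | rfl <;> simp [*]
      rw [abs_lt] at hx1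
      exact ⟨_, ⟨by gcongr; linarith, by gcongr; linarith⟩, rfl⟩
  · rw [Nat.not_odd_iff] at hj
    simp only [hj, Nat.cast_zero, (abs_nonneg _).not_gt, false_or, Set.mem_singleton_iff]
    exact ⟨fun h => ⟨0, rfl, by simpa using h⟩, by rintro ⟨x, rfl, rfl⟩; simp⟩

lemma coe_mul_two_pi_div_eq_iff {N : ℝ} (hN : N ≠ 0) (a b : ℝ) :
    ((a * (2 * π / N) : ℝ) : Real.Angle) = ((b * (2 * π / N) : ℝ) : Real.Angle) ↔
      ∃ n : ℤ, a - b = n * N := by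
  rw [Real.Angle.angle_eq_iff_two_pi_dvd_sub]
  refine exists_congr fun n => ?_
  rw [← sub_mul, mul_div_assoc', div_eq_iff hN, mul_comm (a - b), mul_assoc (2 * π)]
  exact mul_right_inj' (by positivity)

lemma add_sub_eq_intCast_iff_dvd {n : ℕ} [NeZero n] (i k s : ZMod n) (D : ℤ) :
    i + k - s = D ↔ (n : ℤ) ∣ i.val + k.val - s.val - D := by
  rw [← ZMod.intCast_zmod_eq_zero_iff_dvd]
  push_cast
  simp [sub_eq_zero]

lemma exists_oprasame_iff (m : ℕ) (i k s : ZMod (4 * m)) :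
    (∃ A B C : OPoint, oprasame m i A B ∧ oprasame m k B C ∧ oprasame m s A C) ↔
      ∃ θ ∈ sector m i, ∃ φ ∈ sector m k, θ + φ ∈ sector m s := by
  constructor
  · rintro ⟨A, B, C, ⟨-, hAB⟩, ⟨-, hBC⟩, ⟨-, hAC⟩⟩
    exact ⟨_, hAB, _, hBC, by rwa [sub_add_sub_cancel']⟩
  · rintro ⟨θ, hθ, φ, hφ, hsum⟩
    exact ⟨(0, 0), (0, θ), (0, θ + φ),
      ⟨rfl, by simpa⟩, ⟨rfl, by simpa⟩, ⟨rfl, by simpa⟩⟩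

lemma exists_mem_sector_add_mem_sector_iff {m : ℕ} (hm : m ≠ 0) (i k s : ZMod (4 * m)) :
    (∃ θ ∈ sector m i, ∃ φ ∈ sector m k, θ + φ ∈ sector m s) ↔
      ∃ D : ℤ, i + k - s = D ∧ ∃ x y z, SectorOffset i.val x ∧ SectorOffset k.val y ∧
        SectorOffset s.val z ∧ z - x - y = D := by
  have : NeZero (4 * m) := ⟨by omega⟩
  have hN : (4 * m : ℝ) ≠ 0 := by positivity
  simp only [mem_sector_iff hm]
  constructor
  · rintro ⟨_, ⟨x, hx, rfl⟩, _, ⟨y, hy, rfl⟩, z, hz, hsum⟩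
    rw [← Real.Angle.coe_add, ← add_mul, coe_mul_two_pi_div_eq_iff hN] at hsum
    obtain ⟨n, hn⟩ := hsum
    refine ⟨i.val + k.val - s.val - n * (4 * m), ?_, x, y, z, hx, hy, hz,
      by push_cast; linarith⟩
    rw [add_sub_eq_intCast_iff_dvd]
    exact ⟨n, by push_cast; ring⟩
  · rintro ⟨D, hD, x, y, z, hx, hy, hz, hxyz⟩
    obtain ⟨n, hn⟩ := (add_sub_eq_intCast_iff_dvd i k s D).mp hD
    refine ⟨_, ⟨x, hx, rfl⟩, _, ⟨y, hy, rfl⟩, z, hz, ?_⟩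
    rw [← Real.Angle.coe_add, ← add_mul, coe_mul_two_pi_div_eq_iff hN]
    refine ⟨n, ?_⟩
    have hn' := congrArg (Int.cast : ℤ → ℝ) hn
    push_cast at hn'
    linarith

lemma turnRel_iff_exists_int {m : ℕ} (i j k : ZMod (4 * m)) :
    turnRel m i j k ↔ ∃ D : ℤ, i + j + k = D ∧
      if Odd i.val ∧ Odd j.val then D = 0 ∨ D = 1 ∨ D = -1 else D = 0 := by
  unfold turnRel
  split_ifs
  · constructor
    · rintro (h | h | h)
      exacts [⟨0, by simpa, .inl rfl⟩, ⟨1, by simpa, .inr (.inl rfl)⟩,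
        ⟨-1, by simpa, .inr (.inr rfl)⟩]
    · rintro ⟨D, h, rfl | rfl | rfl⟩ <;> simp_all
  · exact ⟨fun h => ⟨0, by simpa, rfl⟩, by rintro ⟨D, h, rfl⟩; simpa using h⟩

/-- composition of two same-position relations. -/
theorem stmt14 (m : ℕ) (hm : 1 ≤ m) (i k s : ZMod (4*m)) :
    (∃ A B C : OPoint, oprasame m i A B ∧ oprasame m k B C ∧ oprasame m s A C) ↔
      turnRel m i k (-s) := by
  have : NeZero (4 * m) := ⟨by omega⟩
  rw [exists_oprasame_iff, exists_mem_sector_add_mem_sector_iff (by omega), turnRel_iff_exists_int,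
    ← sub_eq_add_neg]
  refine exists_congr fun D => and_congr_right fun hD => exists_sectorOffset_sub_sub_eq_iff ?_
  exact Dvd.dvd.trans ⟨2 * m, by push_cast; ring⟩ ((add_sub_eq_intCast_iff_dvd i k s D).mp hD)
end

section
/- The configuration A ∠_i^j B, B ∠_k^l C, A ∠_s^t C (all distinct-position relations) is realizable by o-points if and only if there exist u, v, w ∈ ℤ/4m with turn_m(u, -i, s), turn_m(v, -k, j), turn_m(w, -t, l), and triangle_m(u, v, w). -/
open Real Complex

/-! Measuring angles in units of `2π/(4m)`, the sector `[n]_m` is the image of `n` for even `n`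
and of `(n - 1, n + 1)` for odd `n`. If angles in `[a], [b], [c]` sum to `0`, then
`a + b + c ≡ D (mod 4m)` with `D ≡ a + b + c (mod 2)` and `|D|` less than the number of odd
indices; this is `turn_m`, and conversely every `turn_m` triple is realised by such angles. At a
vertex, the interior angle, the two relation angles and the orientation are related in this way,
so a suitable orientation exists iff the corresponding `turn_m` holds. Finally, the oriented angles
`α, β, γ` of triangles are exactly the triples with `α + β + γ = π`, equal signs and not all `π`
(the law of sines gives existence), and on sectors these conditions read `triangle_m`. -/

noncomputable def sectorAngle (m : ℕ) : ℝ →+ Real.Angle :=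
  Real.Angle.coeHom.comp (AddMonoidHom.mulLeft (2 * π / (4 * m)))

def IsOffset (n : ℤ) (e : ℝ) : Prop := |e| < 1 ∧ (Even n → e = 0)

section Sector

variable {m : ℕ}

lemma sectorAngle_apply (x : ℝ) :
    sectorAngle m x = ((2 * π / (4 * m) * x : ℝ) : Real.Angle) := rfl

lemma sign_sectorAngle_of_pos_of_lt {x : ℝ} (h₀ : 0 < x) (h₁ : x < 2 * m) :
    (sectorAngle m x).sign = 1 := by
  have : (0 : ℝ) < m := by linarith
  rw [sectorAngle_apply, Real.Angle.sign, Real.Angle.sin_coe, sign_eq_one_iff]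
  apply Real.sin_pos_of_pos_of_lt_pi (by positivity)
  calc 2 * π / (4 * m) * x < 2 * π / (4 * m) * (2 * m) := by gcongr
    _ = π := by field_simp; ring

variable [NeZero m]

lemma sectorAngle_eq_zero_iff {x : ℝ} :
    sectorAngle m x = 0 ↔ ∃ q : ℤ, x = 4 * m * q := by
  have hm : (m : ℝ) ≠ 0 := Nat.cast_ne_zero.2 (NeZero.ne m)
  rw [sectorAngle_apply, Real.Angle.coe_eq_zero_iff]
  refine exists_congr fun q => ?_
  rw [zsmul_eq_mul]
  constructor <;> intro h
  · field_simp at h; linarith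
  · rw [h]; field_simp

lemma sectorAngle_two_mul : sectorAngle m (2 * m) = π := by
  have hm : (m : ℝ) ≠ 0 := Nat.cast_ne_zero.2 (NeZero.ne m)
  rw [sectorAngle_apply]
  congr 1
  field_simp
  ring

lemma odd_val_intCast (n : ℤ) : Odd (n : ZMod (4 * m)).val ↔ Odd n := by
  rw [← Int.odd_coe_nat, ZMod.val_intCast, Int.odd_iff, Int.odd_iff,
    Int.emod_emod_of_dvd n (by push_cast; exact Dvd.intro (2 * (m : ℤ)) (by ring))]

lemma mem_sector_intCast {n : ℤ} {θ : Real.Angle} :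
    θ ∈ sector m (n : ZMod (4 * m)) ↔ ∃ e, IsOffset n e ∧ sectorAngle m (n + e) = θ := by
  have : (0 : ℝ) < m := Nat.cast_pos.2 (NeZero.pos m)
  have hpos : (0 : ℝ) < 2 * π / (4 * m) := by positivity
  set r := (n : ZMod (4 * m)).val
  have hshift : ∀ e : ℝ, sectorAngle m (n + e) = sectorAngle m (r + e) := by
    intro e
    have hr : (r : ℤ) = n % (4 * m) := by rw [ZMod.val_intCast]; push_cast; rfl
    rw [← sub_eq_zero, ← map_sub, sectorAngle_eq_zero_iff]
    refine ⟨n / (4 * m), ?_⟩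
    have := Int.mul_ediv_add_emod n (4 * m)
    rw [← hr] at this
    have : (n : ℝ) = 4 * m * (n / (4 * m) : ℤ) + r := by exact_mod_cast this.symm
    linarith
  have hscale : ∀ x : ℝ, 2 * π * x / (4 * m) = 2 * π / (4 * m) * x := fun x => by ring
  simp only [hshift, IsOffset, sector, odd_val_intCast, hscale]
  split_ifs with hodd
  · simp only [← Int.not_odd_iff_even, hodd, not_true_eq_false, false_imp_iff, and_true]
    constructor
    · rintro ⟨t, ⟨h₁, h₂⟩, rfl⟩
      refine ⟨t / (2 * π / (4 * m)) - r, ?_, ?_⟩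
      · rw [abs_sub_lt_iff]
        constructor
        · rw [sub_lt_iff_lt_add, div_lt_iff₀ hpos]; linarith
        · rw [sub_lt_comm, lt_div_iff₀ hpos]; linarith
      · rw [sectorAngle_apply, add_sub_cancel, mul_div_cancel₀ _ hpos.ne']
    · rintro ⟨e, he, rfl⟩
      rw [abs_lt] at he
      refine ⟨2 * π / (4 * m) * (r + e), ⟨?_, ?_⟩, rfl⟩ <;> gcongr <;> linarith
  · simp only [Int.not_odd_iff_even.1 hodd, true_imp_iff, Set.mem_singleton_iff]
    constructor
    · rintro rfl
      exact ⟨0, ⟨by simp, rfl⟩, by rw [add_zero]; rfl⟩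
    · rintro ⟨e, ⟨-, rfl⟩, rfl⟩
      rw [add_zero]; rfl

lemma mem_sector_iff_s17 {i : ZMod (4 * m)} {θ : Real.Angle} :
    θ ∈ sector m i ↔ ∃ e, IsOffset i.val e ∧ sectorAngle m (i.val + e) = θ := by
  have hi : (((i.val : ℤ)) : ZMod (4 * m)) = i := by simp
  conv_lhs => rw [← hi, mem_sector_intCast]
  simp only [Int.cast_natCast]

lemma sectorAngle_mem_sector {n : ℤ} {e : ℝ} (he : IsOffset n e) :
    sectorAngle m (n + e) ∈ sector m (n : ZMod (4 * m)) :=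
  (mem_sector_intCast).2 ⟨e, he, rfl⟩

lemma exists_mem_sector (m : ℕ) [NeZero m] (θ : Real.Angle) : ∃ i, θ ∈ sector m i := by
  have : (0 : ℝ) < m := Nat.cast_pos.2 (NeZero.pos m)
  have hc : (2 * π / (4 * m) : ℝ) ≠ 0 := by positivity
  obtain ⟨x, rfl⟩ : ∃ x, sectorAngle m x = θ :=
    ⟨θ.toReal / (2 * π / (4 * m)), by rw [sectorAngle_apply, mul_div_cancel₀ _ hc, θ.coe_toReal]⟩
  have h₁ := Int.floor_le x
  have h₂ := Int.lt_floor_add_one x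
  by_cases hx : (⌊x⌋ : ℝ) = x
  · exact ⟨⌊x⌋, by simpa [hx] using sectorAngle_mem_sector (m := m) (n := ⌊x⌋) ⟨by simp, fun _ => rfl⟩⟩
  have h₁ : (⌊x⌋ : ℝ) < x := lt_of_le_of_ne h₁ hx
  rcases Int.even_or_odd ⌊x⌋ with hev | hodd
  · refine ⟨((⌊x⌋ + 1 : ℤ) : ZMod (4 * m)), ?_⟩
    have hoff : IsOffset (⌊x⌋ + 1) (x - ⌊x⌋ - 1) :=
      ⟨by rw [abs_lt]; constructor <;> linarith, fun h => absurd h (by simpa using hev.add_one)⟩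
    simpa using sectorAngle_mem_sector (m := m) hoff
  · refine ⟨(⌊x⌋ : ZMod (4 * m)), ?_⟩
    have hoff : IsOffset ⌊x⌋ (x - ⌊x⌋) :=
      ⟨by rw [abs_lt]; constructor <;> linarith, fun h => absurd hodd (Int.not_odd_iff_even.2 h)⟩
    simpa using sectorAngle_mem_sector (m := m) hoff

lemma neg_mem_sector {i : ZMod (4 * m)} {θ : Real.Angle} (h : θ ∈ sector m i) :
    -θ ∈ sector m (-i) := by
  obtain ⟨e, ⟨he, hev⟩, rfl⟩ := mem_sector_iff_s17.1 h
  have hoff : IsOffset (-(i.val : ℤ)) (-e) :=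
    ⟨by rwa [abs_neg], fun h => by rw [hev (even_neg.1 h), neg_zero]⟩
  convert sectorAngle_mem_sector (m := m) hoff using 2
  · simp
  · push_cast; rw [← map_neg, neg_add]

lemma sub_pi_mem_sector {i : ZMod (4 * m)} {θ : Real.Angle} (h : θ ∈ sector m i) :
    θ - π ∈ sector m (i - ((2 * m : ℕ) : ZMod (4 * m))) := by
  obtain ⟨e, ⟨he, hev⟩, rfl⟩ := mem_sector_iff_s17.1 h
  have hoff : IsOffset ((i.val : ℤ) - (2 * m : ℕ)) e :=
    ⟨he, fun h => hev (by simpa [Int.even_sub, parity_simps] using h)⟩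
  have := sectorAngle_mem_sector (m := m) hoff
  push_cast at this ⊢
  rwa [show (i.val : ℝ) - 2 * m + e = (i.val + e) - 2 * m by ring, map_sub,
    sectorAngle_two_mul, ZMod.natCast_zmod_val] at this

lemma sign_eq_signm {i : ZMod (4 * m)} {θ : Real.Angle} (h : θ ∈ sector m i) :
    (θ.sign : ℤ) = signm m i := by
  obtain ⟨e, ⟨he, hev⟩, rfl⟩ := mem_sector_iff_s17.1 h
  have hlt := ZMod.val_lt i
  rw [abs_lt] at he
  have hev' : Even i.val → e = 0 := fun h => hev (by exact_mod_cast h)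
  unfold signm
  split_ifs with h₀ h₁
  · rcases h₀ with h₀ | h₀ <;> rw [h₀] at hev' ⊢ <;> rw [hev' (by simp)]
    · simp
    · push_cast; simp [sectorAngle_two_mul]
  · rw [sign_sectorAngle_of_pos_of_lt]
    · simp
    · have : (1 : ℝ) ≤ i.val := by exact_mod_cast Nat.one_le_iff_ne_zero.2 (by tauto)
      linarith
    · have : (i.val : ℝ) + 1 ≤ 2 * m := by exact_mod_cast h₁
      linarith
  · have hx : (i.val : ℝ) + e = ((i.val : ℝ) + e - 2 * m) + 2 * m := by ring
    rw [hx, map_add, sectorAngle_two_mul, Real.Angle.sign_add_pi,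
      sign_sectorAngle_of_pos_of_lt]
    · simp
    · have : 2 * (m : ℝ) + 1 ≤ i.val := by exact_mod_cast (by omega : 2 * m + 1 ≤ i.val)
      linarith
    · have : (i.val : ℝ) + 1 ≤ 4 * m := by exact_mod_cast (by omega : i.val + 1 ≤ 4 * m)
      linarith

end Sector

section Turn

lemma turnRel_iff (m : ℕ) (i j k : ZMod (4 * m)) :
    turnRel m i j k ↔
      ∃ D : ℤ, i + j + k = D ∧ (D = 0 ∨ Odd i.val ∧ Odd j.val ∧ (D = 1 ∨ D = -1)) := by
  unfold turnRel
  split_ifs with h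
  · constructor
    · rintro (h' | h' | h')
      exacts [⟨0, by simp [h'], .inl rfl⟩, ⟨1, by simp [h'], .inr ⟨h.1, h.2, .inl rfl⟩⟩,
        ⟨-1, by simp [h'], .inr ⟨h.1, h.2, .inr rfl⟩⟩]
    · rintro ⟨D, hD, rfl | ⟨-, -, rfl | rfl⟩⟩ <;> simp [hD]
  · constructor
    · exact fun h' => ⟨0, by simp [h'], .inl rfl⟩
    · rintro ⟨D, hD, rfl | ⟨hi, hj, -⟩⟩
      exacts [by simp [hD], absurd ⟨hi, hj⟩ h]

lemma IsOffset.even_and_eq_zero_or_odd {n : ℤ} {e : ℝ} (h : IsOffset n e) :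
    Even n ∧ e = 0 ∨ Odd n :=
  (Int.even_or_odd n).imp (fun hn => ⟨hn, h.2 hn⟩) id

lemma eq_zero_or_of_isOffset {a b c D : ℤ} {e f g : ℝ} (ha : IsOffset a e)
    (hb : IsOffset b f) (hc : IsOffset c g) (hsum : (D : ℝ) + e + f + g = 0)
    (hpar : Even (a + b + c - D)) :
    D = 0 ∨ Odd a ∧ Odd b ∧ Odd c ∧ (D = 1 ∨ D = -1) := by
  have he := abs_lt.1 ha.1
  have hf := abs_lt.1 hb.1
  have hg := abs_lt.1 hc.1
  have hlo : -3 < D := by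
    have : (-3 : ℝ) < D := by linarith
    exact_mod_cast this
  have hhi : D < 3 := by
    have : (D : ℝ) < 3 := by linarith
    exact_mod_cast this
  -- `|D|` is less than the number of odd indices among `a, b, c`
  rcases ha.even_and_eq_zero_or_odd with ⟨ha, rfl⟩ | ha <;>
    rcases hb.even_and_eq_zero_or_odd with ⟨hb, rfl⟩ | hb <;>
    rcases hc.even_and_eq_zero_or_odd with ⟨hc, rfl⟩ | hc <;>
    simp only [Int.odd_iff, Int.even_iff] at ha hb hc hpar ⊢ <;>
    interval_cases D <;> first | omega | (exfalso; push_cast at hsum; linarith)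

lemma exists_isOffset_of_add_eq {a b c D : ℤ} {e : ℝ} (ha : IsOffset a e) (hsum : a + b + c = D)
    (hD : D = 0 ∨ Odd a ∧ Odd b ∧ (D = 1 ∨ D = -1)) :
    ∃ f g, IsOffset b f ∧ IsOffset c g ∧ (D : ℝ) + e + f + g = 0 := by
  have he := abs_lt.1 ha.1
  have hD' : D = 0 ∨ Odd b ∧ Odd c ∧ (D = 1 ∨ D = -1) := by
    refine hD.imp_right fun ⟨ha, hb, h⟩ => ⟨hb, ?_, h⟩
    simp only [Int.odd_iff] at ha hb ⊢
    omega
  rcases Int.even_or_odd b with hb | hb <;> rcases Int.even_or_odd c with hc | hc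
  · obtain rfl : D = 0 := hD'.resolve_right fun h => Int.not_even_iff_odd.2 h.1 hb
    obtain rfl : e = 0 := ha.2 (by rw [show a = -(b + c) by omega]; exact (hb.add hc).neg)
    exact ⟨0, 0, ⟨by simp, fun _ => rfl⟩, ⟨by simp, fun _ => rfl⟩, by simp⟩
  · obtain rfl : D = 0 := hD'.resolve_right fun h => Int.not_even_iff_odd.2 h.1 hb
    exact ⟨0, -e, ⟨by simp, fun _ => rfl⟩,
      ⟨by rw [abs_neg]; exact ha.1, fun h => absurd h (Int.not_even_iff_odd.2 hc)⟩, by simp⟩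
  · obtain rfl : D = 0 := hD'.resolve_right fun h => Int.not_even_iff_odd.2 h.2.1 hc
    exact ⟨-e, 0, ⟨by rw [abs_neg]; exact ha.1, fun h => absurd h (Int.not_even_iff_odd.2 hb)⟩,
      ⟨by simp, fun _ => rfl⟩, by simp⟩
  · have hD1 : |(D : ℝ)| ≤ 1 := by
      rcases hD with rfl | ⟨-, -, rfl | rfl⟩ <;> simp
    have hoff : IsOffset b (-(D + e) / 2) ∧ IsOffset c (-(D + e) / 2) := by
      have : |(-(D + e) / 2 : ℝ)| < 1 := by
        rw [abs_le] at hD1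
        rw [abs_lt]
        constructor <;> linarith
      exact ⟨⟨this, fun h => absurd h (Int.not_even_iff_odd.2 hb)⟩,
        ⟨this, fun h => absurd h (Int.not_even_iff_odd.2 hc)⟩⟩
    exact ⟨_, _, hoff.1, hoff.2, by ring⟩

variable {m : ℕ} [NeZero m]

lemma exists_intCast_of_add_eq_zero {i j k : ZMod (4 * m)} {α β γ : Real.Angle}
    (hα : α ∈ sector m i) (hβ : β ∈ sector m j) (hγ : γ ∈ sector m k) (h : α + β + γ = 0) :
    ∃ D : ℤ, i + j + k = D ∧
      (D = 0 ∨ Odd i.val ∧ Odd j.val ∧ Odd k.val ∧ (D = 1 ∨ D = -1)) := by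
  obtain ⟨e, he, rfl⟩ := mem_sector_iff_s17.1 hα
  obtain ⟨f, hf, rfl⟩ := mem_sector_iff_s17.1 hβ
  obtain ⟨g, hg, rfl⟩ := mem_sector_iff_s17.1 hγ
  rw [← map_add, ← map_add, sectorAngle_eq_zero_iff] at h
  obtain ⟨q, hq⟩ := h
  set D : ℤ := i.val + j.val + k.val - 4 * m * q
  have hsum : (D : ℝ) + e + f + g = 0 := by simp only [D]; push_cast; linarith
  have hpar : Even ((i.val : ℤ) + j.val + k.val - D) :=
    ⟨2 * m * q, by simp only [D]; ring⟩
  refine ⟨D, ?_, ?_⟩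
  · have h4 : (4 * m : ZMod (4 * m)) = 0 := by exact_mod_cast ZMod.natCast_self (4 * m)
    simp [D, h4]
  · simpa only [Int.odd_coe_nat] using eq_zero_or_of_isOffset he hf hg hsum hpar

lemma turnRel_of_add_eq_zero {i j k : ZMod (4 * m)} {α β γ : Real.Angle}
    (hα : α ∈ sector m i) (hβ : β ∈ sector m j) (hγ : γ ∈ sector m k) (h : α + β + γ = 0) :
    turnRel m i j k := by
  obtain ⟨D, hD, h'⟩ := exists_intCast_of_add_eq_zero hα hβ hγ h
  exact (turnRel_iff m i j k).2 ⟨D, hD, h'.imp_right fun h => ⟨h.1, h.2.1, h.2.2.2⟩⟩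

lemma zero_mem_sector : (0 : Real.Angle) ∈ sector m 0 := by
  simpa using sectorAngle_mem_sector (m := m) (n := 0) ⟨by simp, fun _ => rfl⟩

lemma eq_of_mem_sector_of_mem_sector {i j : ZMod (4 * m)} {θ : Real.Angle}
    (hi : θ ∈ sector m i) (hj : θ ∈ sector m j) : i = j := by
  obtain ⟨D, hD, rfl | ⟨-, -, h0, -⟩⟩ :=
    exists_intCast_of_add_eq_zero hi (neg_mem_sector hj) zero_mem_sector (by simp)
  · simpa [← sub_eq_add_neg, sub_eq_zero] using hD
  · simp at h0

lemma exists_add_eq_zero_of_turnRel {i j k : ZMod (4 * m)} {α : Real.Angle}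
    (h : turnRel m i j k) (hα : α ∈ sector m i) :
    ∃ β ∈ sector m j, ∃ γ ∈ sector m k, α + β + γ = 0 := by
  obtain ⟨D, hD, hD'⟩ := (turnRel_iff m i j k).1 h
  obtain ⟨e, he, rfl⟩ := mem_sector_iff_s17.1 hα
  obtain ⟨f, g, hf, hg, hsum⟩ := exists_isOffset_of_add_eq he
    (show (i.val : ℤ) + j.val + (D - i.val - j.val) = D by ring)
    (by simpa only [Int.odd_coe_nat] using hD')
  have hj := sectorAngle_mem_sector (m := m) hf
  have hk := sectorAngle_mem_sector (m := m) hg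
  have hk' : (((D - i.val - j.val : ℤ)) : ZMod (4 * m)) = k := by
    push_cast [← hD, ZMod.natCast_zmod_val]
    abel
  simp only [Int.cast_natCast, ZMod.natCast_zmod_val, hk'] at hj hk
  refine ⟨_, hj, _, hk, ?_⟩
  rw [← map_add, ← map_add, ← map_zero (sectorAngle m), ← hsum]
  push_cast
  congr 1
  ring

lemma exists_sub_mem_sector_iff_turnRel {u i s : ZMod (4 * m)} {p q : Real.Angle}
    (hu : p - q ∈ sector m u) :
    (∃ o, p - o ∈ sector m i ∧ q - o ∈ sector m s) ↔ turnRel m u (-i) s := by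
  constructor
  · rintro ⟨o, hi, hs⟩
    exact turnRel_of_add_eq_zero hu (neg_mem_sector hi) hs (by abel)
  · intro h
    obtain ⟨x, hx, y, hy, hsum⟩ := exists_add_eq_zero_of_turnRel h hu
    refine ⟨p + x, ?_, ?_⟩
    · simpa using neg_mem_sector hx
    · convert hy using 1
      rw [← sub_eq_zero, ← neg_eq_zero, ← hsum]
      abel

end Turn

section Triangle

open EuclideanGeometry

attribute [local instance] Complex.finrank_real_complex_fact

noncomputable instance : Module.Oriented ℝ ℂ (Fin 2) := ⟨Complex.orientation⟩

lemma phiAngle_sub_phiAngle {a b c : ℂ} (hb : b ≠ a) (hc : c ≠ a) :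
    phiAngle a b - phiAngle a c = ∡ c a b := by
  change _ = Complex.orientation.oangle (c - a) (b - a)
  rw [Complex.oangle, Complex.arg_mul_coe_angle ((map_ne_zero _).2 (sub_ne_zero.2 hc))
    (sub_ne_zero.2 hb), Complex.arg_conj_coe_angle, phiAngle, phiAngle]
  abel

def TriangleRealizable (α β γ : Real.Angle) : Prop :=
  ∃ a b c : ℂ, a ≠ b ∧ b ≠ c ∧ a ≠ c ∧ phiAngle a b - phiAngle a c = α ∧
    phiAngle b c - phiAngle b a = β ∧ phiAngle c a - phiAngle c b = γ

def IsTriangleAngles (α β γ : Real.Angle) : Prop :=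
  α + β + γ = π ∧ α.sign = β.sign ∧ β.sign = γ.sign ∧ ¬(α = π ∧ β = π ∧ γ = π)

variable {α β γ : Real.Angle}

lemma TriangleRealizable.isTriangleAngles (h : TriangleRealizable α β γ) :
    IsTriangleAngles α β γ := by
  obtain ⟨a, b, c, hab, hbc, hac, rfl, rfl, rfl⟩ := h
  rw [phiAngle_sub_phiAngle hab.symm hac.symm, phiAngle_sub_phiAngle hbc.symm hab,
    phiAngle_sub_phiAngle hac hbc]
  refine ⟨?_, (oangle_rotate_sign c a b).symm, (oangle_rotate_sign a b c).symm, ?_⟩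
  · rw [← oangle_add_oangle_add_oangle_eq_pi hab.symm hbc.symm hac]
    abel
  · rintro ⟨hα, hβ, -⟩
    rw [(oangle_eq_pi_iff_sbtw.1 hα).oangle₂₃₁_eq_zero] at hβ
    exact Real.Angle.pi_ne_zero hβ.symm

lemma TriangleRealizable.rotate (h : TriangleRealizable α β γ) : TriangleRealizable β γ α := by
  obtain ⟨a, b, c, hab, hbc, hac, h₁, h₂, h₃⟩ := h
  exact ⟨b, c, a, hbc, hac.symm, hab.symm, h₂, h₃, h₁⟩

lemma TriangleRealizable.neg (h : TriangleRealizable α β γ) :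
    TriangleRealizable (-α) (-γ) (-β) := by
  obtain ⟨a, b, c, hab, hbc, hac, h₁, h₂, h₃⟩ := h
  exact ⟨a, c, b, hac, hbc.symm, hab, by rw [← h₁, neg_sub], by rw [← h₃, neg_sub],
    by rw [← h₂, neg_sub]⟩

lemma triangleRealizable_pi_zero_zero : TriangleRealizable π 0 0 := by
  refine ⟨0, 1, -1, by norm_num, by norm_num, by norm_num, ?_, ?_, ?_⟩ <;> simp only [phiAngle]
  · norm_num
  · rw [show (-1 : ℂ) - 1 = ((-2 : ℝ) : ℂ) by push_cast; ring,
      Complex.arg_ofReal_of_neg (by norm_num)]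
    norm_num
  · norm_num

lemma triangleRealizable_of_sign_eq_one (hα : α.sign = 1) (hβ : β.sign = 1) (hγ : γ.sign = 1)
    (h : α + β + γ = π) : TriangleRealizable α β γ := by
  have hsin : ∀ {θ : Real.Angle}, θ.sign = 1 → 0 < θ.sin := sign_eq_one_iff.1
  have hR : 0 < β.sin / γ.sin := div_pos (hsin hβ) (hsin hγ)
  have hR' : 0 < α.sin / γ.sin := div_pos (hsin hα) (hsin hγ)
  set c : ℂ := ((β.sin / γ.sin : ℝ) : ℂ) * ((-α).cos + (-α).sin * Complex.I)
  -- the law of sines, in the form `sin β · e^{-iα} + sin α · e^{iβ} = sin (α + β)`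
  have h1c : 1 - c = ((α.sin / γ.sin : ℝ) : ℂ) * (β.cos + β.sin * Complex.I) := by
    have hγ0 := (hsin hγ).ne'
    induction α using Real.Angle.induction_on with | _ x
    induction β using Real.Angle.induction_on with | _ y
    obtain rfl : γ = ↑(π - x - y) := by rw [Real.Angle.coe_sub, Real.Angle.coe_sub, ← h]; abel
    simp only [c, ← Real.Angle.coe_neg, Real.Angle.sin_coe, Real.Angle.cos_coe, Real.cos_neg,
      Real.sin_neg, show π - x - y = π - (x + y) by ring, Real.sin_pi_sub] at hγ0 ⊢
    have hs := Real.sin_add x y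
    generalize Real.sin (x + y) = s at *
    apply Complex.ext <;> simp [-Complex.ofReal_sin, -Complex.ofReal_cos] <;> field_simp
    linear_combination hs
  have hargc : (c.arg : Real.Angle) = -α := Complex.arg_mul_cos_add_sin_mul_I_coe_angle hR _
  have harg1c : ((1 - c).arg : Real.Angle) = β := by
    rw [h1c]; exact Complex.arg_mul_cos_add_sin_mul_I_coe_angle hR' _
  have hc0 : c ≠ 0 := fun h0 => by
    rw [h0, Complex.arg_zero, Real.Angle.coe_zero, eq_comm, neg_eq_zero] at hargc
    simp [hargc] at hα
  have hc1 : 1 - c ≠ 0 := fun h0 => by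
    rw [h0, Complex.arg_zero, Real.Angle.coe_zero, eq_comm] at harg1c
    simp [harg1c] at hβ
  refine ⟨0, 1, c, zero_ne_one, fun h => hc1 (by rw [h, sub_self]), hc0.symm, ?_, ?_, ?_⟩
  · simp [phiAngle, hargc]
  · rw [phiAngle, phiAngle, show c - 1 = -(1 - c) by ring, Complex.arg_neg_coe_angle hc1, harg1c]
    simp
  · rw [phiAngle, phiAngle, zero_sub, Complex.arg_neg_coe_angle hc0, hargc, harg1c, ← h]
    abel

lemma IsTriangleAngles.triangleRealizable (h : IsTriangleAngles α β γ) :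
    TriangleRealizable α β γ := by
  obtain ⟨hsum, hαβ, hβγ, hπ⟩ := h
  rcases hs : β.sign with _ | _ | _
  · -- the triples in `{0, π}` summing to `π`, not all `π`, are the rotations of `(π, 0, 0)`
    rw [hs] at hαβ hβγ
    rcases Real.Angle.sign_eq_zero_iff.1 hαβ with rfl | rfl <;>
      rcases Real.Angle.sign_eq_zero_iff.1 hs with rfl | rfl <;>
      rcases Real.Angle.sign_eq_zero_iff.1 hβγ.symm with rfl | rfl <;>
      simp [Real.Angle.coe_pi_add_coe_pi, Real.Angle.pi_ne_zero.symm] at hsum hπ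
    · exact triangleRealizable_pi_zero_zero.rotate
    · exact triangleRealizable_pi_zero_zero.rotate.rotate
    · exact triangleRealizable_pi_zero_zero
  · have := triangleRealizable_of_sign_eq_one (α := -α) (β := -γ) (γ := -β)
      (by simp [hαβ, hs]) (by simp [← hβγ, hs]) (by simp [hs])
      (by rw [← Real.Angle.neg_coe_pi, ← hsum]; abel)
    simpa using this.neg
  · exact triangleRealizable_of_sign_eq_one (hαβ.trans hs) hs (hβγ ▸ hs) hsum

theorem triangleRealizable_iff : TriangleRealizable α β γ ↔ IsTriangleAngles α β γ :=
  ⟨TriangleRealizable.isTriangleAngles, IsTriangleAngles.triangleRealizable⟩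

end Triangle

section TriRel

variable {m : ℕ} [NeZero m]

lemma sign_eq_sign_iff_signm_eq {u v : ZMod (4 * m)} {α β : Real.Angle}
    (hα : α ∈ sector m u) (hβ : β ∈ sector m v) :
    α.sign = β.sign ↔ signm m u = signm m v := by
  rw [← sign_eq_signm hα, ← sign_eq_signm hβ]
  cases α.sign <;> cases β.sign <;> simp

lemma mem_sector_two_mul_iff {θ : Real.Angle} :
    θ ∈ sector m ((2 * m : ℕ) : ZMod (4 * m)) ↔ θ = π := by
  have h2m : Even ((2 * m : ℕ) : ℤ) := ⟨m, by push_cast; ring⟩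
  rw [← Int.cast_natCast, mem_sector_intCast, eq_comm]
  constructor
  · rintro ⟨e, ⟨-, he⟩, rfl⟩
    push_cast [he h2m, add_zero, sectorAngle_two_mul]
    rfl
  · rintro rfl
    exact ⟨0, ⟨by simp, fun _ => rfl⟩, by push_cast [add_zero, sectorAngle_two_mul]; rfl⟩

lemma triRel_iff {u v w : ZMod (4 * m)} :
    triRel m u v w ↔
      ∃ α ∈ sector m u, ∃ β ∈ sector m v, ∃ γ ∈ sector m w, IsTriangleAngles α β γ := by
  have hpi := (mem_sector_two_mul_iff (m := m) (θ := π)).2 rfl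
  have hsub : w - ((2 * m : ℕ) : ZMod (4 * m)) - ((2 * m : ℕ) : ZMod (4 * m)) = w := by
    rw [sub_sub, ← Nat.cast_add, show 2 * m + 2 * m = 4 * m by ring, ZMod.natCast_self, sub_zero]
  constructor
  · rintro ⟨hturn, hne, hs₁, hs₂⟩
    obtain ⟨α, hα⟩ : (sector m u).Nonempty :=
      ⟨_, mem_sector_iff_s17.2 ⟨0, ⟨by simp, fun _ => rfl⟩, rfl⟩⟩
    obtain ⟨β, hβ, γ, hγ, hsum⟩ := exists_add_eq_zero_of_turnRel hturn hα
    have hγ' := sub_pi_mem_sector hγ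
    rw [hsub] at hγ'
    refine ⟨α, hα, β, hβ, γ - π, hγ', ?_, (sign_eq_sign_iff_signm_eq hα hβ).2 hs₁,
      (sign_eq_sign_iff_signm_eq hβ hγ').2 hs₂, ?_⟩
    · rw [← add_sub_assoc, hsum, zero_sub, Real.Angle.neg_coe_pi]
    · rintro ⟨rfl, rfl, h₃⟩
      rw [h₃] at hγ'
      exact hne ⟨eq_of_mem_sector_of_mem_sector hα hpi,
        eq_of_mem_sector_of_mem_sector hβ hpi, eq_of_mem_sector_of_mem_sector hγ' hpi⟩
  · rintro ⟨α, hα, β, hβ, γ, hγ, hsum, h₁, h₂, hπ⟩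
    refine ⟨turnRel_of_add_eq_zero hα hβ (sub_pi_mem_sector hγ)
      (by rw [← add_sub_assoc, hsum, sub_self]), ?_, (sign_eq_sign_iff_signm_eq hα hβ).1 h₁,
      (sign_eq_sign_iff_signm_eq hβ hγ).1 h₂⟩
    rintro ⟨rfl, rfl, rfl⟩
    exact hπ ⟨mem_sector_two_mul_iff.1 hα, mem_sector_two_mul_iff.1 hβ,
      mem_sector_two_mul_iff.1 hγ⟩

end TriRel

/-- composition of distinct-position relations via turns and triangles. -/
theorem stmt17 (m : ℕ) (hm : 1 ≤ m) (i j k l s t : ZMod (4*m)) :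
    (∃ A B C : OPoint, oprarel m i j A B ∧ oprarel m k l B C ∧ oprarel m s t A C) ↔
      ∃ u v w : ZMod (4*m),
        turnRel m u (-i) s ∧ turnRel m v (-k) j ∧ turnRel m w (-t) l ∧
        triRel m u v w := by
  have : NeZero m := ⟨by omega⟩
  constructor
  · rintro ⟨⟨a, oa⟩, ⟨b, ob⟩, ⟨c, oc⟩, ⟨hab, ha₁, hb₁⟩, ⟨hbc, hb₂, hc₂⟩, ⟨hac, ha₂, hc₁⟩⟩
    obtain ⟨u, hu⟩ := exists_mem_sector m (phiAngle a b - phiAngle a c)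
    obtain ⟨v, hv⟩ := exists_mem_sector m (phiAngle b c - phiAngle b a)
    obtain ⟨w, hw⟩ := exists_mem_sector m (phiAngle c a - phiAngle c b)
    exact ⟨u, v, w, (exists_sub_mem_sector_iff_turnRel hu).1 ⟨oa, ha₁, ha₂⟩,
      (exists_sub_mem_sector_iff_turnRel hv).1 ⟨ob, hb₂, hb₁⟩,
      (exists_sub_mem_sector_iff_turnRel hw).1 ⟨oc, hc₁, hc₂⟩,
      triRel_iff.2 ⟨_, hu, _, hv, _, hw,
        triangleRealizable_iff.1 ⟨a, b, c, hab, hbc, hac, rfl, rfl, rfl⟩⟩⟩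
  · rintro ⟨u, v, w, hA, hB, hC, htri⟩
    obtain ⟨α, hu, β, hv, γ, hw, hαβγ⟩ := triRel_iff.1 htri
    obtain ⟨a, b, c, hab, hbc, hac, rfl, rfl, rfl⟩ := triangleRealizable_iff.2 hαβγ
    obtain ⟨oa, ha₁, ha₂⟩ := (exists_sub_mem_sector_iff_turnRel hu).2 hA
    obtain ⟨ob, hb₂, hb₁⟩ := (exists_sub_mem_sector_iff_turnRel hv).2 hB
    obtain ⟨oc, hc₁, hc₂⟩ := (exists_sub_mem_sector_iff_turnRel hw).2 hC
    exact ⟨(a, oa), (b, ob), (c, oc), ⟨hab, ha₁, hb₁⟩, ⟨hbc, hb₂, hc₂⟩, ⟨hac, ha₂, hc₁⟩⟩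
end
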